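/- Let H be a real Hilbert space with continuous coercive symmetric bilinear form b inducing the energy norm |||q||| = b(q,q)^{1/2}, let V ⊂ H be a closed subspace, let p ∈ V satisfy b(p,φ) = l(φ) for all φ ∈ V, and let p_h ∈ H be arbitrary. Then |||p − p_h||| ≤ inf_{s ∈ V} |||p_h − s||| + sup_{φ ∈ V, |||φ|||=1} b(p − p_h, φ). -/
import Mathlib

set_option maxHeartbeats 1000000


/-- abstract splitting of the energy-norm error of an arbitrary
(possibly nonconforming) approximation `p_h` of the Galerkin solution `p ∈ V`
into a best-approximation term and a dual-norm residual term. -/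
theorem stmt2 {H : Type*} [NormedAddCommGroup H] [InnerProductSpace ℝ H]
    [CompleteSpace H]
    (b : H → H → ℝ)
    (hadd₁ : ∀ x y z, b (x + y) z = b x z + b y z)
    (hadd₂ : ∀ x y z, b x (y + z) = b x y + b x z)
    (hsmul₁ : ∀ (c : ℝ) (x y : H), b (c • x) y = c * b x y)
    (hsymm : ∀ x y, b x y = b y x)
    (hcoer : ∃ c > 0, ∀ x, c * ‖x‖ ^ 2 ≤ b x x)
    (hbdd : ∃ C, ∀ x y, |b x y| ≤ C * ‖x‖ * ‖y‖)
    (V : Submodule ℝ H) (hV : IsClosed (V : Set H))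
    (l : H → ℝ)
    (p : H) (hpV : p ∈ V) (hp : ∀ φ ∈ V, b p φ = l φ)
    (p_h : H) :
    Real.sqrt (b (p - p_h) (p - p_h))
      ≤ (⨅ s : V, Real.sqrt (b (p_h - s) (p_h - s)))
        + ⨆ φ : {φ : H // φ ∈ V ∧ Real.sqrt (b φ φ) = 1}, b (p - p_h) φ := by
  obtain ⟨c, hc, hcoer⟩ := hcoer
  obtain ⟨C, hbdd⟩ := hbdd
  haveI : Nonempty V := ⟨0⟩
  -- derived algebraic identities
  have hsmul₂ : ∀ (k : ℝ) (x y : H), b x (k • y) = k * b x y := fun k x y => by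
    rw [hsymm, hsmul₁, hsymm]
  have hzero₁ : ∀ x, b 0 x = 0 := fun x => by
    have h := hsmul₁ 0 0 x; simpa using h
  have hzero₂ : ∀ x, b x 0 = 0 := fun x => by rw [hsymm]; exact hzero₁ x
  have hneg₁ : ∀ x y, b (-x) y = - b x y := fun x y => by
    have h := hsmul₁ (-1) x y; simpa using h
  have hneg₂ : ∀ x y, b x (-y) = - b x y := fun x y => by
    rw [hsymm, hneg₁, hsymm]
  have hnegneg : ∀ x y, b (-x) (-y) = b x y := fun x y => by
    rw [hneg₁, hneg₂, neg_neg]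
  have hsub₁ : ∀ x y z, b (x - y) z = b x z - b y z := fun x y z => by
    rw [sub_eq_add_neg, hadd₁, hneg₁]; ring
  have hsub₂ : ∀ x y z, b x (y - z) = b x y - b x z := fun x y z => by
    rw [hsymm, hsub₁, hsymm z x, hsymm y x]
  have hb0 : ∀ x, 0 ≤ b x x := fun x => le_trans (by positivity) (hcoer x)
  have hbz : ∀ x, b x x ≤ 0 → x = 0 := by
    intro x hx
    by_contra hxne
    have hpos : 0 < ‖x‖ := norm_pos_iff.mpr hxne
    nlinarith [hcoer x, mul_pos hc (mul_pos hpos hpos)]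
  have hexpand : ∀ (x y : H) (t : ℝ),
      b (x - t • y) (x - t • y) = b x x - 2 * t * b x y + t ^ 2 * b y y := by
    intro x y t
    simp only [hsub₁, hsub₂, hsmul₁, hsmul₂, hsymm y x]
    ring
  have hexpand2 : ∀ x y : H, b (x + y) (x + y) = b x x + 2 * b x y + b y y := by
    intro x y
    simp only [hadd₁, hadd₂, hsymm y x]
    ring
  set e := p - p_h with he
  set N := Real.sqrt (b e e) with hN
  have hN0 : 0 ≤ N := Real.sqrt_nonneg _
  have hN2 : N ^ 2 = b e e := Real.sq_sqrt (hb0 e)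
  -- the sup is bounded above
  have hSbdd : BddAbove (Set.range fun φ : {φ : H // φ ∈ V ∧ Real.sqrt (b φ φ) = 1}
      => b e φ) := by
    refine ⟨|C| * ‖e‖ * Real.sqrt (1 / c), ?_⟩
    rintro _ ⟨⟨φ, hφV, hφ1⟩, rfl⟩
    have hφφ : b φ φ = 1 := by
      have := Real.sq_sqrt (hb0 φ)
      rw [hφ1] at this; linarith [this.symm]
    have hnφ : ‖φ‖ ≤ Real.sqrt (1 / c) := by
      have h1 : c * ‖φ‖ ^ 2 ≤ 1 := by rw [← hφφ]; exact hcoer φ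
      have h2 : ‖φ‖ ^ 2 ≤ 1 / c := by
        rw [le_div_iff₀ hc]; linarith
      calc ‖φ‖ = Real.sqrt (‖φ‖ ^ 2) := (Real.sqrt_sq (norm_nonneg φ)).symm
        _ ≤ Real.sqrt (1 / c) := Real.sqrt_le_sqrt h2
    have h3 : |b e φ| ≤ C * ‖e‖ * ‖φ‖ := hbdd e φ
    have h4 : C * ‖e‖ * ‖φ‖ ≤ |C| * ‖e‖ * Real.sqrt (1 / c) := by
      have : C * ‖e‖ ≤ |C| * ‖e‖ :=
        mul_le_mul_of_nonneg_right (le_abs_self C) (norm_nonneg e)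
      nlinarith [norm_nonneg e, norm_nonneg φ, abs_nonneg C, Real.sqrt_nonneg (1/c),
        mul_le_mul_of_nonneg_left hnφ (mul_nonneg (abs_nonneg C) (norm_nonneg e))]
    calc b e φ ≤ |b e φ| := le_abs_self _
      _ ≤ C * ‖e‖ * ‖φ‖ := h3
      _ ≤ _ := h4
  set S := ⨆ φ : {φ : H // φ ∈ V ∧ Real.sqrt (b φ φ) = 1}, b e φ with hS
  have hS0 : 0 ≤ S := by
    by_cases hne : Nonempty {φ : H // φ ∈ V ∧ Real.sqrt (b φ φ) = 1}
    · obtain ⟨⟨φ₀, hφ₀V, hφ₀1⟩⟩ := hne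
      have h1 : b e φ₀ ≤ S := le_ciSup hSbdd ⟨φ₀, hφ₀V, hφ₀1⟩
      have hmem : (-φ₀ : H) ∈ V ∧ Real.sqrt (b (-φ₀ : H) (-φ₀ : H)) = 1 := by
        refine ⟨V.neg_mem hφ₀V, ?_⟩
        rw [hnegneg]; exact hφ₀1
      have h2 : b e (-φ₀) ≤ S := le_ciSup hSbdd ⟨-φ₀, hmem⟩
      rw [hneg₂] at h2
      linarith
    · haveI := not_nonempty_iff.mp hne
      rw [hS, Real.iSup_of_isEmpty]
  -- the inf
  set F : H → ℝ := fun x => b (p_h - x) (p_h - x) with hF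
  have hFbdd : BddBelow (Set.range fun s : V => F (s : H)) := by
    refine ⟨0, ?_⟩
    rintro _ ⟨s, rfl⟩
    exact hb0 _
  have hIbdd : BddBelow (Set.range fun s : V =>
      Real.sqrt (b (p_h - s) (p_h - s))) := by
    refine ⟨0, ?_⟩
    rintro _ ⟨s, rfl⟩
    exact Real.sqrt_nonneg _
  set I := ⨅ s : V, Real.sqrt (b (p_h - s) (p_h - s)) with hI
  have hI0 : 0 ≤ I := le_ciInf fun s => Real.sqrt_nonneg _
  set d := ⨅ s : V, F (s : H) with hd
  have hd0 : 0 ≤ d := le_ciInf fun s => hb0 _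
  have hsqrtdI : Real.sqrt d ≤ I := by
    refine le_ciInf fun s => ?_
    exact Real.sqrt_le_sqrt (ciInf_le hFbdd s)
  have hdN : d ≤ N ^ 2 := by
    have h1 : d ≤ F p := ciInf_le hFbdd ⟨p, hpV⟩
    have h2 : F p = b e e := by
      rw [hF]
      show b (p_h - p) (p_h - p) = b e e
      rw [show p_h - p = -e from by rw [he]; abel, hnegneg]
    rw [hN2, ← h2]; exact h1
  -- key estimate for each small ε
  have key : ∀ ε : ℝ, 0 < ε → ε ≤ 1 →
      N ^ 2 ≤ (I + S) * N + (2 * S + 2 * N + I + 3) * ε := by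
    intro ε hε hε1
    have hlt : (⨅ s : V, F (s : H)) < d + ε ^ 2 := by rw [← hd]; nlinarith
    obtain ⟨s₀, hs₀⟩ := exists_lt_of_ciInf_lt hlt
    -- near-orthogonality
    have horth : ∀ v ∈ V, |b (p_h - (s₀ : H)) v| ≤ ε * Real.sqrt (b v v) := by
      intro v hv
      by_cases hvz : b v v ≤ 0
      · have hv0 : v = 0 := hbz v hvz
        simp [hv0, hzero₂]
      · push_neg at hvz
        set a := b (p_h - (s₀ : H)) v with ha
        set t := a / b v v with ht
        have hmem : (s₀ : H) + t • v ∈ V := V.add_mem s₀.2 (V.smul_mem t hv)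
        have h1 : d ≤ F ((s₀ : H) + t • v) := ciInf_le hFbdd ⟨_, hmem⟩
        have hexp : F ((s₀ : H) + t • v) = F (s₀ : H) - a ^ 2 / b v v := by
          rw [hF]
          show b (p_h - ((s₀:H) + t • v)) (p_h - ((s₀:H) + t • v))
            = b (p_h - (s₀:H)) (p_h - (s₀:H)) - a ^ 2 / b v v
          rw [show p_h - ((s₀:H) + t • v) = (p_h - (s₀:H)) - t • v from by abel,
            hexpand]
          rw [← ha, ht]
          field_simp
          ring
        have h2 : a ^ 2 ≤ ε ^ 2 * b v v := by
          rw [hexp] at h1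
          have h3 : a ^ 2 / b v v < ε ^ 2 := by nlinarith
          calc a ^ 2 = a ^ 2 / b v v * b v v := by field_simp
            _ ≤ ε ^ 2 * b v v := mul_le_mul_of_nonneg_right h3.le (hb0 v)
        calc |a| = Real.sqrt (a ^ 2) := (Real.sqrt_sq_eq_abs a).symm
          _ ≤ Real.sqrt (ε ^ 2 * b v v) := Real.sqrt_le_sqrt h2
          _ = ε * Real.sqrt (b v v) := by
              rw [Real.sqrt_mul (sq_nonneg ε), Real.sqrt_sq hε.le]
    set M := Real.sqrt (F (s₀ : H)) with hM
    have hM0 : 0 ≤ M := Real.sqrt_nonneg _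
    have hM2 : M ^ 2 = F (s₀ : H) := Real.sq_sqrt (hb0 _)
    set P := Real.sqrt (b (p - (s₀ : H)) (p - (s₀ : H))) with hP
    have hP0 : 0 ≤ P := Real.sqrt_nonneg _
    have hP2 : P ^ 2 = b (p - (s₀ : H)) (p - (s₀ : H)) := Real.sq_sqrt (hb0 _)
    -- bounds on M
    have hMN : M ≤ N + ε := by
      have h1 : F (s₀ : H) ≤ N ^ 2 + ε ^ 2 := by nlinarith
      have h2 : N ^ 2 + ε ^ 2 ≤ (N + ε) ^ 2 := by nlinarith
      calc M ≤ Real.sqrt ((N + ε) ^ 2) := Real.sqrt_le_sqrt (le_trans h1 h2)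
        _ = N + ε := Real.sqrt_sq (by linarith)
    have hMI : M ≤ I + ε := by
      have h1 : F (s₀ : H) ≤ (Real.sqrt d + ε) ^ 2 := by
        have hdd : (Real.sqrt d) ^ 2 = d := Real.sq_sqrt hd0
        nlinarith [Real.sqrt_nonneg d]
      calc M ≤ Real.sqrt ((Real.sqrt d + ε) ^ 2) := Real.sqrt_le_sqrt h1
        _ = Real.sqrt d + ε := Real.sqrt_sq (by positivity)
        _ ≤ I + ε := by linarith
    -- near orthogonality for v = p - s₀
    have hq : |b (p - (s₀ : H)) ((s₀ : H) - p_h)| ≤ ε * P := by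
      have h1 : b (p - (s₀ : H)) ((s₀ : H) - p_h)
          = - b (p_h - (s₀ : H)) (p - (s₀ : H)) := by
        rw [show (s₀ : H) - p_h = -(p_h - (s₀ : H)) from (neg_sub _ _).symm, hneg₂,
          hsymm]
      rw [h1, abs_neg]
      exact horth (p - (s₀ : H)) (V.sub_mem hpV s₀.2)
    -- decomposition
    have he' : e = (p - (s₀ : H)) + ((s₀ : H) - p_h) := by rw [he]; abel
    have hFs : b ((s₀ : H) - p_h) ((s₀ : H) - p_h) = F (s₀ : H) := by
      rw [hF]
      show b ((s₀:H) - p_h) ((s₀:H) - p_h) = b (p_h - (s₀:H)) (p_h - (s₀:H))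
      rw [show (s₀ : H) - p_h = -(p_h - (s₀ : H)) from (neg_sub _ _).symm, hnegneg]
    have hdecomp : N ^ 2 = P ^ 2 + 2 * b (p - (s₀ : H)) ((s₀ : H) - p_h)
        + M ^ 2 := by
      rw [hN2, he', hexpand2, hP2, hM2, hFs]
    -- P bound
    have hPN : P ≤ N + 2 * ε := by
      by_contra hcon
      push_neg at hcon
      have h1 : P ^ 2 ≤ N ^ 2 + 2 * ε * P := by
        have := abs_le.mp hq
        nlinarith [sq_nonneg M]
      nlinarith
    -- the sup bound on b e (p - s₀)
    have hT1 : b e (p - (s₀ : H)) ≤ S * P := by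
      by_cases hPz : P = 0
      · have hbz2 : b (p - (s₀ : H)) (p - (s₀ : H)) = 0 := by
          rw [← hP2, hPz]; ring
        have h0 : p - (s₀ : H) = 0 := hbz _ (le_of_eq hbz2)
        rw [h0, hzero₂, hPz, mul_zero]
      · have hPpos : 0 < P := lt_of_le_of_ne hP0 (Ne.symm hPz)
        set φ : H := P⁻¹ • (p - (s₀ : H)) with hφ
        have hφV : φ ∈ V := V.smul_mem _ (V.sub_mem hpV s₀.2)
        have hφ1 : Real.sqrt (b φ φ) = 1 := by
          rw [hφ, hsmul₁, hsmul₂, ← hP2]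
          rw [show P⁻¹ * (P⁻¹ * P ^ 2) = 1 from by field_simp]
          exact Real.sqrt_one
        have h1 : b e φ ≤ S := le_ciSup hSbdd ⟨φ, hφV, hφ1⟩
        have h2 : b e (p - (s₀ : H)) = P * b e φ := by
          rw [hφ, hsmul₂]
          field_simp
        rw [h2]
        calc P * b e φ ≤ P * S := mul_le_mul_of_nonneg_left h1 hP0
          _ = S * P := mul_comm _ _
    -- main split
    have hmain : N ^ 2 = b e (p - (s₀ : H)) + b (p - (s₀ : H)) ((s₀ : H) - p_h)
        + M ^ 2 := by
      have h1 : b e (p - (s₀ : H)) = P ^ 2 + b ((s₀ : H) - p_h) (p - (s₀ : H)) := by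
        rw [he', hadd₁, hP2]
      rw [h1, hsymm ((s₀ : H) - p_h) (p - (s₀ : H))]
      linarith [hdecomp]
    -- combine
    have habs := abs_le.mp hq
    have hM2b : M ^ 2 ≤ (I + ε) * (N + ε) := by nlinarith
    have hSP : S * P ≤ S * (N + 2 * ε) := mul_le_mul_of_nonneg_left hPN hS0
    have hEP : ε * P ≤ ε * (N + 2 * ε) := mul_le_mul_of_nonneg_left hPN hε.le
    nlinarith
  -- pass to the limit ε → 0
  have hfin : N ^ 2 ≤ (I + S) * N := by
    refine le_of_forall_pos_le_add fun δ hδ => ?_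
    have hK : (0 : ℝ) < 2 * S + 2 * N + I + 3 := by linarith
    set ε := min 1 (δ / (2 * S + 2 * N + I + 3)) with hε
    have hεpos : 0 < ε := lt_min one_pos (div_pos hδ hK)
    have hε1 : ε ≤ 1 := min_le_left _ _
    have h2 : (2 * S + 2 * N + I + 3) * ε ≤ δ := by
      have h3 : ε ≤ δ / (2 * S + 2 * N + I + 3) := min_le_right _ _
      calc (2 * S + 2 * N + I + 3) * ε
          ≤ (2 * S + 2 * N + I + 3) * (δ / (2 * S + 2 * N + I + 3)) :=
            mul_le_mul_of_nonneg_left h3 hK.le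
        _ = δ := by field_simp
    linarith [key ε hεpos hε1]
  by_cases hNz : N = 0
  · rw [hNz]; linarith
  · have hNpos : 0 < N := lt_of_le_of_ne hN0 (Ne.symm hNz)
    nlinarith
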